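/- arXiv:math/0202178 — 2 statements merged into one kernel-verified Lean document; each statement's English description precedes it below -/
import Mathlib

section
/- Let m be an integer with 3 ≤ m ≤ 9, and let p, q₁, ..., q_m be integers with p > 0, q₁ ≥ q₂ ≥ ... ≥ q_m ≥ 1, and p ≥ q₁ + q₂ + q₃ (reduced condition). Set ξ² = p² - Σᵢ qᵢ² and Δ = 3p - Σᵢ qᵢ. Then ξ² - Δ ≥ (9 - m)(q₃² - q₃) ≥ 0. -/
set_option maxHeartbeats 1000000


theorem stmt_7 (m : ℕ) (hm3 : 3 ≤ m) (hm9 : m ≤ 9) (p : ℤ) (q : Fin m → ℤ)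
    (hp : 0 < p)
    (hanti : ∀ i j : Fin m, i ≤ j → q j ≤ q i)
    (hq1 : ∀ i, 1 ≤ q i)
    (hred : p ≥ q ⟨0, by omega⟩ + q ⟨1, by omega⟩ + q ⟨2, by omega⟩) :
    p ^ 2 - (∑ i, (q i) ^ 2) - (3 * p - ∑ i, q i)
      ≥ (9 - (m : ℤ)) * ((q ⟨2, by omega⟩) ^ 2 - q ⟨2, by omega⟩) ∧
    (9 - (m : ℤ)) * ((q ⟨2, by omega⟩) ^ 2 - q ⟨2, by omega⟩) ≥ 0 := by
  set i0 : Fin m := ⟨0, by omega⟩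
  set i1 : Fin m := ⟨1, by omega⟩
  set i2 : Fin m := ⟨2, by omega⟩
  set a := q i0 with ha
  set b := q i1 with hb
  set c := q i2 with hc
  have hab : b ≤ a := hanti i0 i1 (by simp [i0, i1, Fin.le_def])
  have hbc : c ≤ b := hanti i1 i2 (by simp [i1, i2, Fin.le_def])
  have hc1 : 1 ≤ c := hq1 i2
  have hsplit : (∑ i, (q i) ^ 2) - (∑ i, q i) = ∑ i, ((q i) ^ 2 - q i) := by
    rw [Finset.sum_sub_distrib]
  -- the three-element set
  have h01 : i0 ≠ i1 := by simp [i0, i1, Fin.ext_iff]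
  have h02 : i0 ≠ i2 := by simp [i0, i2, Fin.ext_iff]
  have h12 : i1 ≠ i2 := by simp [i1, i2, Fin.ext_iff]
  set S3 : Finset (Fin m) := {i0, i1, i2} with hS3
  have hcardS3 : S3.card = 3 := by
    rw [hS3, Finset.card_insert_of_notMem (by simp [h01, h02]),
      Finset.card_insert_of_notMem (by simp [h12]), Finset.card_singleton]
  have hsumS3 : ∑ i ∈ S3, ((q i) ^ 2 - q i)
      = (a ^ 2 - a) + (b ^ 2 - b) + (c ^ 2 - c) := by
    rw [hS3, Finset.sum_insert (by simp [h01, h02]),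
      Finset.sum_insert (by simp [h12]), Finset.sum_singleton]
    ring
  have hcardcompl : (Finset.univ \ S3).card = m - 3 := by
    rw [Finset.card_sdiff_of_subset (Finset.subset_univ _), hcardS3, Finset.card_univ,
      Fintype.card_fin]
  have hbound : ∀ i ∈ Finset.univ \ S3, (q i) ^ 2 - q i ≤ c ^ 2 - c := by
    intro i hi
    have hi' : i ∉ S3 := (Finset.mem_sdiff.mp hi).2
    have hival : 2 ≤ i.val := by
      by_contra h
      push_neg at h
      interval_cases hiv : i.val <;>
        [exact hi' (by simp [hS3]; left; exact Fin.ext hiv);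
         exact hi' (by simp [hS3]; right; left; exact Fin.ext hiv)]
    have hqic : q i ≤ c := hanti i2 i (by simpa [i2, Fin.le_def] using hival)
    have hqi1 : 1 ≤ q i := hq1 i
    nlinarith [hqic, hqi1, hc1]
  have hsumcompl : ∑ i ∈ Finset.univ \ S3, ((q i) ^ 2 - q i)
      ≤ ((m : ℤ) - 3) * (c ^ 2 - c) := by
    calc ∑ i ∈ Finset.univ \ S3, ((q i) ^ 2 - q i)
        ≤ (Finset.univ \ S3).card • (c ^ 2 - c) :=
          Finset.sum_le_card_nsmul _ _ _ hbound
      _ = ((m : ℤ) - 3) * (c ^ 2 - c) := by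
          rw [hcardcompl, nsmul_eq_mul]
          congr 1
          push_cast [Nat.cast_sub hm3]
          ring
  have htotal : ∑ i, ((q i) ^ 2 - q i)
      ≤ (a ^ 2 - a) + (b ^ 2 - b) + (c ^ 2 - c) + ((m : ℤ) - 3) * (c ^ 2 - c) := by
    have := Finset.sum_sdiff (Finset.subset_univ S3)
      (f := fun i => (q i) ^ 2 - q i)
    rw [← this, hsumS3]
    linarith [hsumcompl]
  have hDpos : 0 ≤ c ^ 2 - c := by nlinarith
  constructor
  · have h1 : p ^ 2 - (∑ i, (q i) ^ 2) - (3 * p - ∑ i, q i)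
        = p ^ 2 - 3 * p - (∑ i, ((q i) ^ 2 - q i)) := by
      rw [← hsplit]; ring
    rw [h1]
    have hs : a + b + c ≤ p := hred
    have hm : (m : ℤ) ≤ 9 := by exact_mod_cast hm9
    have e1 : (a + b + c) ^ 2 - 3 * (a + b + c) ≤ p ^ 2 - 3 * p := by
      nlinarith [mul_nonneg (sub_nonneg.mpr hs) (by linarith : (0:ℤ) ≤ p + (a + b + c) - 3)]
    have e2 : 6 * (c ^ 2 - c) ≤ (a + b + c) ^ 2 - 3 * (a + b + c)
        - ((a ^ 2 - a) + (b ^ 2 - b) + (c ^ 2 - c)) := by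
      nlinarith [mul_nonneg (by linarith : (0:ℤ) ≤ a - c) (by linarith : (0:ℤ) ≤ c - 1),
        mul_nonneg (by linarith : (0:ℤ) ≤ b - c) (by linarith : (0:ℤ) ≤ c - 1),
        mul_nonneg (by linarith : (0:ℤ) ≤ a - c) (by linarith : (0:ℤ) ≤ b - c),
        mul_nonneg (by linarith : (0:ℤ) ≤ c) (by linarith : (0:ℤ) ≤ a - c),
        mul_nonneg (by linarith : (0:ℤ) ≤ c) (by linarith : (0:ℤ) ≤ b - c)]
    linarith [htotal, e1, e2]
  · have hm : (m : ℤ) ≤ 9 := by exact_mod_cast hm9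
    nlinarith [hDpos]
end

section
/- For every integer g > 0, the set of tuples (p, q₁, ..., q_m) of integers with 2 ≤ m ≤ 9, p ≥ q₁ + q₂ + q₃ (with q₃ = 0 when m = 2), q₁ ≥ ... ≥ q_m ≥ 1, p² > Σqᵢ², excluding tuples of the form (p, p-1, 1) with m = 2, such that (p² - Σqᵢ² - 3p + Σqᵢ)/2 ≤ g, is finite. -/
private lemma key_bound (g p A B C T R : ℤ) (hg : 0 < g)
    (hB1 : 1 ≤ B) (hBA : B ≤ A) (hCB : C ≤ B) (hC0 : 0 ≤ C)
    (hsum : A + B + C ≤ p) (hA2 : A ≤ p - 2)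
    (hT0 : 0 ≤ T) (hT6 : T ≤ 6 * C) (hR0 : 0 ≤ R) (hRCT : R ≤ C * T)
    (hRC2 : 2 * C * T - 6 * C ^ 2 ≤ R)
    (hQ : A ^ 2 + B ^ 2 + C ^ 2 + R < p ^ 2)
    (hE : p ^ 2 - (A ^ 2 + B ^ 2 + C ^ 2 + R) - 3 * p + (A + B + C + T) ≤ 2 * g) :
    p ≤ 10 * g + 40 := by
  rcases eq_or_lt_of_le hC0 with hC | hC
  · -- C = 0, so T = 0, R = 0
    have hCz : C = 0 := hC.symm
    subst hCz
    have hT : T = 0 := le_antisymm (by linarith) hT0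
    have hR : R = 0 := le_antisymm (by linarith [hRCT]) hR0
    subst hT; subst hR
    rcases le_or_gt B 2 with hB2 | hB2
    · have h1 : 0 ≤ (p - 2 - A) * (p + A - 3) :=
        mul_nonneg (by linarith) (by linarith)
      have h2 : 0 ≤ (2 - B) * (B + 1) := mul_nonneg (by linarith) (by linarith)
      nlinarith [h1, h2, hg]
    · have h1 : 0 ≤ (p - A - B) * (B + 1) := mul_nonneg (by linarith) (by linarith)
      have h2 : 0 ≤ (p - 2 - A) * (p + A - B - 4) :=
        mul_nonneg (by linarith) (by linarith)
      nlinarith [h1, h2, hg]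
  · rcases le_or_gt p (3 * C) with hp3 | hp3
    · -- balanced case : p = 3C, A = B = C
      have hpC : p = 3 * C := le_antisymm hp3 (by linarith)
      have hAC : A = C := le_antisymm (by linarith) (by linarith)
      have hBC : B = C := le_antisymm (by linarith) hCB
      rw [hpC, hAC, hBC] at hQ hE
      rw [hpC]
      have hR6 : R ≤ 6 * C ^ 2 - 1 := by nlinarith [hQ]
      have hT6' : T ≤ 6 * C - 1 := by
        by_contra h
        push_neg at h
        have h6 : 6 * C ≤ T := by linarith
        have h7 : 2 * C * (6 * C) ≤ 2 * C * T :=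
          mul_le_mul_of_nonneg_left h6 (by linarith)
        nlinarith [h7, hRC2, hR6]
      have h1 : 0 ≤ (6 * C - T - 1) * (C - 1) :=
        mul_nonneg (by linarith) (by linarith)
      nlinarith [h1, hRCT, hE, hg]
    · -- generic case : p ≥ 3C + 1
      have hP1 : 0 ≤ (6 * C - T) * (C - 1) := mul_nonneg (by linarith) (by linarith)
      have hX1 : 0 ≤ (A + B - 2 * C) * (C - 1) := mul_nonneg (by linarith) (by linarith)
      have hX2 : 0 ≤ (p - A - B - C) * (C - 1) := mul_nonneg (by linarith) (by linarith)
      have hX3 : 0 ≤ (p - 3 * C - 1) * (4 * C - 3) := mul_nonneg (by linarith) (by linarith)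
      have hY1 : 0 ≤ (A - C) * (B - C) := mul_nonneg (by linarith) (by linarith)
      have hY2 : 0 ≤ (A - C) * (p - A - B - C) := mul_nonneg (by linarith) (by linarith)
      have hY3 : 0 ≤ (B - C) * (p - A - B - C) := mul_nonneg (by linarith) (by linarith)
      have hY4 : 0 ≤ (p - A - B - C) ^ 2 := sq_nonneg _
      have hY5 : 0 ≤ C * (p - A - B - C) := mul_nonneg (by linarith) (by linarith)
      -- E ≥ 2(p - 3C)
      have hG1 : 2 * (p - 3 * C) ≤
          p ^ 2 - (A ^ 2 + B ^ 2 + C ^ 2 + R) - 3 * p + (A + B + C + T) := by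
        linarith [hP1, hX1, hX2, hY1, hY2, hY3, hY4, hRCT]
      -- E ≥ 4C - 3
      have hG2 : 4 * C - 3 ≤
          p ^ 2 - (A ^ 2 + B ^ 2 + C ^ 2 + R) - 3 * p + (A + B + C + T) := by
        linarith [hP1, hX3, hY1, hY2, hY3, hY4, hY5, hRCT]
      linarith

theorem stmt_12 (g : ℤ) (hg : 0 < g) :
    {x : ℕ × ℤ × (ℕ → ℤ) |
      let m := x.1; let p := x.2.1; let q := x.2.2
      2 ≤ m ∧ m ≤ 9 ∧
      (∀ i, m ≤ i → q i = 0) ∧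
      (∀ i, i + 1 < m → q (i + 1) ≤ q i) ∧
      (∀ i, i < m → 1 ≤ q i) ∧
      p ≥ q 0 + q 1 + q 2 ∧
      p ^ 2 > ∑ i ∈ Finset.range m, (q i) ^ 2 ∧
      ¬(m = 2 ∧ q 0 = p - 1 ∧ q 1 = 1) ∧
      p ^ 2 - (∑ i ∈ Finset.range m, (q i) ^ 2) - 3 * p + (∑ i ∈ Finset.range m, q i)
        ≤ 2 * g}.Finite := by
  set M : ℤ := 10 * g + 40 with hM
  apply Set.Finite.of_finite_image
    (f := fun x : ℕ × ℤ × (ℕ → ℤ) => (x.1, x.2.1, fun i : Fin 9 => x.2.2 i.val))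
  · apply Set.Finite.subset
      (Set.Finite.prod (Set.finite_Icc 2 9)
        (Set.Finite.prod (Set.finite_Icc (0:ℤ) M)
          (Set.Finite.pi fun _ : Fin 9 => Set.finite_Icc (0:ℤ) M)))
    rintro y ⟨⟨m, p, q⟩, hx, rfl⟩
    obtain ⟨hm2, hm9, hz, hdec, hpos, hsum, hQ, hexcl, hE⟩ := hx
    dsimp only at hm2 hm9 hz hdec hpos hsum hQ hexcl hE
    have hq0 : ∀ i, 0 ≤ q i := by
      intro i
      rcases lt_or_ge i m with h | h
      · linarith [hpos i h]
      · rw [hz i h]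
    have hmono : Antitone q := by
      apply antitone_nat_of_succ_le
      intro n
      rcases lt_or_ge (n + 1) m with h | h
      · exact hdec n h
      · rw [hz _ h]; exact hq0 n
    have hB1 : 1 ≤ q 1 := hpos 1 (by omega)
    -- rewrite sums over range m as sums over range 9
    have hsum9 : ∀ f : ℕ → ℤ, (∀ i, m ≤ i → f i = 0) →
        ∑ i ∈ Finset.range m, f i = ∑ i ∈ Finset.range 9, f i := by
      intro f hf
      refine Finset.sum_subset (Finset.range_subset_range.2 hm9) ?_
      intro i _ hi
      exact hf i (le_of_not_gt (by simpa using hi))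
    have hS9 : ∑ i ∈ Finset.range m, q i = ∑ i ∈ Finset.range 9, q i :=
      hsum9 q hz
    have hQ9 : ∑ i ∈ Finset.range m, (q i) ^ 2 = ∑ i ∈ Finset.range 9, (q i) ^ 2 :=
      hsum9 (fun i => (q i) ^ 2) (fun i hi => by show (q i) ^ 2 = 0; rw [hz i hi]; ring)
    have hexpand : ∀ f : ℕ → ℤ, ∑ i ∈ Finset.range 9, f i
        = f 0 + f 1 + f 2 + f 3 + f 4 + f 5 + f 6 + f 7 + f 8 := by
      intro f
      simp only [Finset.sum_range_succ, Finset.sum_range_zero]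
      ring
    set A := q 0 with hA
    set B := q 1 with hB
    set C := q 2 with hC
    set T := q 3 + q 4 + q 5 + q 6 + q 7 + q 8 with hT
    set R := (q 3) ^ 2 + (q 4) ^ 2 + (q 5) ^ 2 + (q 6) ^ 2 + (q 7) ^ 2 + (q 8) ^ 2 with hR
    have hm3 : q 3 ≤ C := hmono (by omega)
    have hm4 : q 4 ≤ C := hmono (by omega)
    have hm5 : q 5 ≤ C := hmono (by omega)
    have hm6 : q 6 ≤ C := hmono (by omega)
    have hm7 : q 7 ≤ C := hmono (by omega)
    have hm8 : q 8 ≤ C := hmono (by omega)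
    have hT0 : 0 ≤ T := by
      have := hq0 3; have := hq0 4; have := hq0 5
      have := hq0 6; have := hq0 7; have := hq0 8
      rw [hT]; linarith
    have hT6 : T ≤ 6 * C := by rw [hT]; linarith
    have hR0 : 0 ≤ R := by
      rw [hR]
      positivity
    have hRCT : R ≤ C * T := by
      have p3 : 0 ≤ (C - q 3) * q 3 := mul_nonneg (by linarith) (hq0 3)
      have p4 : 0 ≤ (C - q 4) * q 4 := mul_nonneg (by linarith) (hq0 4)
      have p5 : 0 ≤ (C - q 5) * q 5 := mul_nonneg (by linarith) (hq0 5)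
      have p6 : 0 ≤ (C - q 6) * q 6 := mul_nonneg (by linarith) (hq0 6)
      have p7 : 0 ≤ (C - q 7) * q 7 := mul_nonneg (by linarith) (hq0 7)
      have p8 : 0 ≤ (C - q 8) * q 8 := mul_nonneg (by linarith) (hq0 8)
      rw [hR, hT]; linarith [p3, p4, p5, p6, p7, p8]
    have hRC2 : 2 * C * T - 6 * C ^ 2 ≤ R := by
      have p3 := sq_nonneg (q 3 - C)
      have p4 := sq_nonneg (q 4 - C)
      have p5 := sq_nonneg (q 5 - C)
      have p6 := sq_nonneg (q 6 - C)
      have p7 := sq_nonneg (q 7 - C)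
      have p8 := sq_nonneg (q 8 - C)
      rw [hR, hT]; linarith [p3, p4, p5, p6, p7, p8]
    have hBA : B ≤ A := hmono (by omega)
    have hCB : C ≤ B := hmono (by omega)
    have hC0 : 0 ≤ C := hq0 2
    have hsm : A + B + C ≤ p := hsum
    -- exclusion gives A ≤ p - 2
    have hA2 : A ≤ p - 2 := by
      by_contra h
      push_neg at h
      have hA1 : A = p - 1 := le_antisymm (by linarith) (by linarith)
      have hBe : B = 1 := le_antisymm (by linarith) hB1
      have hm : m = 2 := by
        by_contra hm
        have := hpos 2 (by omega)
        rw [← hC] at this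
        linarith
      exact hexcl ⟨hm, hA1, hBe⟩
    have hQ' : A ^ 2 + B ^ 2 + C ^ 2 + R < p ^ 2 := by
      have h := hQ
      rw [hQ9, hexpand (fun i => (q i) ^ 2)] at h
      rw [hA, hB, hC, hR]
      linarith
    have hE' : p ^ 2 - (A ^ 2 + B ^ 2 + C ^ 2 + R) - 3 * p + (A + B + C + T) ≤ 2 * g := by
      have h := hE
      rw [hQ9, hS9, hexpand (fun i => (q i) ^ 2), hexpand q] at h
      rw [hA, hB, hC, hR, hT]
      linarith
    have hpM : p ≤ M := key_bound g p A B C T R hg hB1 hBA hCB hC0 hsm hA2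
        hT0 hT6 hR0 hRCT hRC2 hQ' hE'
    refine ⟨Set.mem_Icc.2 ⟨hm2, hm9⟩, Set.mem_Icc.2 ⟨by linarith, hpM⟩, ?_⟩
    intro i _
    have h1 : q i.val ≤ A := hmono (Nat.zero_le _)
    exact Set.mem_Icc.2 ⟨hq0 i.val, by linarith⟩
  · rintro ⟨m, p, q⟩ hx ⟨m', p', q'⟩ hy h
    simp only [Prod.mk.injEq] at h
    obtain ⟨hm, hp, hq⟩ := h
    obtain ⟨-, hm9, hz, -⟩ := hx
    obtain ⟨-, hm9', hz', -⟩ := hy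
    dsimp only at hm9 hz hm9' hz'
    have hq' : q = q' := by
      funext i
      rcases lt_or_ge i 9 with h9 | h9
      · exact congrFun hq ⟨i, h9⟩
      · rw [hz i (by omega), hz' i (by omega)]
    simp [hm, hp, hq']
end
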